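/- arXiv:2211.06807 — 4 statements merged into one kernel-verified Lean document; each statement's English description precedes it below -/
import Mathlib

section
/- In an optimal TransE model over a vector space (where |e_h + r - e_t| = 0 iff (h,r,t) is in the KB), for any relations r0, r1, the IBL rule r0 ∧ r1 ∧ r1⁻¹ ⇒ r0 holds: if (a, r0, b), (b, r1, c), (c, r1⁻¹, d) are all in the KB, then (a, r0, d) is in the KB. -/
/-- In an optimal TransE model, the IBL rule
`r0 ∧ r1 ∧ r1⁻¹ ⇒ r0` holds. -/
theorem ibl_rule_r0_r1_r1inv
    {E R : Type*} {n : ℕ}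
    (e : E → EuclideanSpace ℝ (Fin n)) (v : R → EuclideanSpace ℝ (Fin n))
    (KB : E → R → E → Prop) (inv : R → R)
    (hopt : ∀ h r t, ‖e h + v r - e t‖ = 0 ↔ KB h r t)
    (hinv_v : ∀ r, v (inv r) = -v r)
    (hinv_KB : ∀ r x y, KB x (inv r) y ↔ KB y r x)
    (r0 r1 : R) (a b c d : E)
    (h1 : KB a r0 b) (h2 : KB b r1 c) (h3 : KB c (inv r1) d) :
    KB a r0 d := by
  have h3' : KB d r1 c := (hinv_KB r1 c d).mp h3
  have e2 : e b + v r1 - e c = 0 := by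
    rw [← norm_eq_zero]; exact (hopt b r1 c).mpr h2
  have e3 : e d + v r1 - e c = 0 := by
    rw [← norm_eq_zero]; exact (hopt d r1 c).mpr h3'
  have hbd : e b = e d := by
    have := sub_eq_zero.mpr (e2.trans e3.symm)
    exact sub_eq_zero.mp (by simpa using this)
  have e1 : e a + v r0 - e b = 0 := by
    rw [← norm_eq_zero]; exact (hopt a r0 b).mpr h1
  exact (hopt a r0 d).mp (by rw [← hbd]; simpa using e1)
end

section
/- In an optimal TransE model, for any relations r0, r1, the IBL rule r1 ∧ r1⁻¹ ∧ r0 ⇒ r0 holds: if (a, r1, b), (b, r1⁻¹, c), (c, r0, d) are all in the KB, then (a, r0, d) is in the KB. -/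
/-- In an optimal TransE model, the IBL rule
`r1 ∧ r1⁻¹ ∧ r0 ⇒ r0` holds. -/
theorem ibl_rule_r1_r1inv_r0
    {E R : Type*} {n : ℕ}
    (e : E → EuclideanSpace ℝ (Fin n)) (v : R → EuclideanSpace ℝ (Fin n))
    (KB : E → R → E → Prop) (inv : R → R)
    (hopt : ∀ h r t, ‖e h + v r - e t‖ = 0 ↔ KB h r t)
    (hinv_v : ∀ r, v (inv r) = -v r)
    (hinv_KB : ∀ r x y, KB x (inv r) y ↔ KB y r x)
    (r0 r1 : R) (a b c d : E)
    (h1 : KB a r1 b) (h2 : KB b (inv r1) c) (h3 : KB c r0 d) :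
    KB a r0 d := by
  rw [← hopt] at h1 h2 h3 ⊢
  rw [hinv_v] at h2
  rw [norm_eq_zero, sub_eq_zero] at h1 h2 h3 ⊢
  have hac : e a = e c := by rw [← h2, ← h1]; abel
  rw [hac] at *; exact h3
end

section
/- In an optimal TransE model, if two entities h and p share a common value for some relation r1 (i.e., there exists c with (h, r1, c) ∈ KB and (p, r1, c) ∈ KB), then e_h = e_p, and consequently h and p share the same values for every relation r0: (h, r0, t) ∈ KB ↔ (p, r0, t) ∈ KB for all t. -/
/-- In an optimal TransE model, sharing a common value for some relation
forces equal embeddings, hence sharing values for every relation. -/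
theorem transE_shared_value_implies_prototype
    {E R : Type*} {n : ℕ}
    (e : E → EuclideanSpace ℝ (Fin n)) (v : R → EuclideanSpace ℝ (Fin n))
    (KB : E → R → E → Prop)
    (hopt : ∀ h r t, ‖e h + v r - e t‖ = 0 ↔ KB h r t)
    (h p : E) (r1 : R)
    (hshare : ∃ c, KB h r1 c ∧ KB p r1 c) :
    e h = e p ∧ ∀ (r0 : R) (t : E), KB h r0 t ↔ KB p r0 t := by
  obtain ⟨c, hc, pc⟩ := hshare
  have h1 : e h + v r1 - e c = 0 := by
    have := (hopt h r1 c).2 hc; simpa [norm_eq_zero] using this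
  have h2 : e p + v r1 - e c = 0 := by
    have := (hopt p r1 c).2 pc; simpa [norm_eq_zero] using this
  have heq : e h = e p := by
    have := sub_eq_zero.mpr (h1.trans h2.symm)
    have : e h + v r1 - e c = e p + v r1 - e c := h1.trans h2.symm
    have := sub_left_injective.eq_iff.mp this
    exact add_right_cancel this
  refine ⟨heq, fun r0 t => ?_⟩
  rw [← hopt h r0 t, ← hopt p r0 t, heq]
end

section
/- In an optimal TransE model, if the relation r1 has at least one instance from entity a (i.e., ∃b, (a, r1, b) ∈ KB) and r1⁻¹ has at least one instance from that b back to some entity d, then for every relation r0 and entity t: (a, r0, t) ∈ KB ↔ (d, r0, t) ∈ KB. That is, any entity reachable by a round-trip r1 then r1⁻¹ from a is a full prototype of a for all relations. -/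
/-- In an optimal TransE model, a round-trip `r1` then `r1⁻¹` from `a`
to `d` makes `d` a full prototype of `a` for all relations. -/
theorem transE_roundtrip_full_prototype
    {E R : Type*} {n : ℕ}
    (e : E → EuclideanSpace ℝ (Fin n)) (v : R → EuclideanSpace ℝ (Fin n))
    (KB : E → R → E → Prop) (inv : R → R)
    (hopt : ∀ h r t, ‖e h + v r - e t‖ = 0 ↔ KB h r t)
    (hinv_v : ∀ r, v (inv r) = -v r)
    (hinv_KB : ∀ r x y, KB x (inv r) y ↔ KB y r x)
    (r1 : R) (a b d : E)
    (h1 : KB a r1 b) (h2 : KB b (inv r1) d) :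
    ∀ (r0 : R) (t : E), KB a r0 t ↔ KB d r0 t := by
  have e1 : e a + v r1 - e b = 0 := by
    rw [← norm_eq_zero]; exact (hopt a r1 b).2 h1
  have e2 : e b + v (inv r1) - e d = 0 := by
    rw [← norm_eq_zero]; exact (hopt b (inv r1) d).2 h2
  rw [hinv_v] at e2
  have had : e a = e d := by
    have h := congrArg₂ (· + ·) e1 e2
    simp only [add_zero] at h
    have : e a - e d = 0 := by
      rw [← h]; abel
    exact sub_eq_zero.mp this
  intro r0 t
  rw [← hopt a r0 t, ← hopt d r0 t, had]
end
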